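/- Let R be a commutative ring in which 2 is a unit, I an ideal, n ≥ 2. Then |ρ_I(Tₙ(R))| = |ρ_I(O_{n−2}(R))| · |R/I|^{n−2}, where Tₙ(R) is the stabilizer of e₁ in Oₙ(R) (with O₀(R) defined as the trivial group). -/

import Mathlib

open Matrix

/-- The split symmetric form. -/
def splitForm (R : Type*) [CommRing R] (n : ℕ) : Matrix (Fin n) (Fin n) R :=
  Matrix.of fun i j =>
    if ((i : ℕ) < n / 2 ∧ (j : ℕ) = i + n / 2) ∨
       ((j : ℕ) < n / 2 ∧ (i : ℕ) = j + n / 2) ∨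
       ((i : ℕ) = j ∧ (i : ℕ) = 2 * (n / 2)) then 1 else 0


set_option linter.unusedSectionVars false
set_option linter.unusedVariables false
set_option maxHeartbeats 1000000



namespace CardRed

variable {R : Type*} [CommRing R] {ι : Type*} [Fintype ι] [DecidableEq ι]

abbrev V (ι : Type*) := (Unit ⊕ Unit) ⊕ ι

def va : V ι := Sum.inl (Sum.inl ())
def vb : V ι := Sum.inl (Sum.inr ())

def hatS (S' : Matrix ι ι R) : Matrix (V ι) (V ι) R :=
  Matrix.of fun u v => match u, v with
    | Sum.inl (Sum.inl _), Sum.inl (Sum.inr _) => 1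
    | Sum.inl (Sum.inr _), Sum.inl (Sum.inl _) => 1
    | Sum.inr k, Sum.inr l => S' k l
    | _, _ => 0

lemma hatS_mulVec (S' : Matrix ι ι R) (y : V ι → R) (u : V ι) :
    (hatS S' *ᵥ y) u = match u with
      | Sum.inl (Sum.inl _) => y vb
      | Sum.inl (Sum.inr _) => y va
      | Sum.inr k => ∑ l, S' k l * y (Sum.inr l) := by
  rcases u with (u|u) | k <;>
    simp [hatS, mulVec, dotProduct, Fintype.sum_sum_type, va, vb]

lemma entry_eq (S' : Matrix ι ι R) (M : Matrix (V ι) (V ι) R) (u v : V ι) :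
    (Mᵀ * hatS S' * M) u v =
      M va u * M vb v + M vb u * M va v +
        ∑ k, ∑ l, M (Sum.inr k) u * S' k l * M (Sum.inr l) v := by
  have h1 : (Mᵀ * hatS S' * M) u v = ∑ k, M k u * (hatS S' *ᵥ (fun l => M l v)) k := by
    rw [Matrix.mul_assoc]
    simp [mul_apply, mulVec, dotProduct]
  rw [h1]
  rw [Fintype.sum_sum_type]
  simp only [Fintype.sum_sum_type, Finset.univ_unique, Finset.sum_singleton,
    hatS_mulVec]
  congr 1
  refine Finset.sum_congr rfl fun k _ => ?_
  rw [Finset.mul_sum]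
  exact Finset.sum_congr rfl fun l _ => by ring

lemma oform (S' A : Matrix ι ι R) (i j : ι) :
    (Aᵀ * S' * A) i j = ∑ k, ∑ l, A k i * S' k l * A l j := by
  rw [Matrix.mul_assoc]
  simp only [mul_apply, transpose_apply]
  refine Finset.sum_congr rfl fun k _ => ?_
  rw [Finset.mul_sum]
  exact Finset.sum_congr rfl fun l _ => by ring

def qf (S' : Matrix ι ι R) (w : ι → R) : R := ∑ k, ∑ l, w k * S' k l * w l

def Psi (half : R) (S' : Matrix ι ι R) (A : Matrix ι ι R) (w : ι → R) :
    Matrix (V ι) (V ι) R :=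
  Matrix.of fun u v => match u, v with
    | Sum.inl (Sum.inl _), Sum.inl (Sum.inl _) => 1
    | Sum.inl (Sum.inl _), Sum.inl (Sum.inr _) => -(half * qf S' w)
    | Sum.inl (Sum.inl _), Sum.inr j => -∑ k, ∑ l, w k * S' k l * A l j
    | Sum.inl (Sum.inr _), Sum.inl (Sum.inr _) => 1
    | Sum.inr k, Sum.inl (Sum.inr _) => w k
    | Sum.inr k, Sum.inr j => A k j
    | _, _ => 0

def Oset (S' : Matrix ι ι R) : Set (Matrix ι ι R) := {A | Aᵀ * S' * A = S'}

def Tset (S' : Matrix ι ι R) : Set (Matrix (V ι) (V ι) R) :=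
  {M | Mᵀ * hatS S' * M = hatS S' ∧ M *ᵥ Pi.single va 1 = Pi.single va 1}

lemma mulVec_single_col (M : Matrix (V ι) (V ι) R) (u : V ι) :
    (M *ᵥ Pi.single (va (ι := ι)) 1) u = M u va := by
  simp [mulVec, dotProduct, Pi.single_apply]

lemma col_va_iff (M : Matrix (V ι) (V ι) R) :
    M *ᵥ Pi.single va 1 = Pi.single va 1 ↔
      ∀ u, M u va = (Pi.single va 1 : V ι → R) u := by
  constructor
  · intro h u; rw [← mulVec_single_col M u, h]
  · intro h; funext u; rw [mulVec_single_col]; exact h u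

lemma psi_mem (half : R) (h : 2 * half = 1) (S' : Matrix ι ι R) (hsym : S'ᵀ = S')
    (A : Matrix ι ι R) (hA : A ∈ Oset S') (w : ι → R) :
    Psi half S' A w ∈ Tset S' := by
  have hA' : ∀ i j, ∑ k, ∑ l, A k i * S' k l * A l j = S' i j := by
    intro i j; rw [← oform]; rw [hA]
  constructor
  · ext u v
    rw [entry_eq]
    rcases u with (u|u) | i <;> rcases v with (v|v) | j <;>
        simp only [Psi, hatS, Matrix.of_apply, va, vb]
    · simp
    · simp
    · simp
    · simp
    · -- (vb, vb)
      have hq : qf S' w = ∑ k, ∑ l, w k * S' k l * w l := rfl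
      rw [← hq]
      linear_combination (-(qf S' w)) * h
    · -- (vb, inr j)
      ring
    · -- (inr i, va)
      simp
    · -- (inr i, vb)
      have key : ∑ k, ∑ l, A k i * S' k l * w l = ∑ k, ∑ l, w k * S' k l * A l i := by
        rw [Finset.sum_comm]
        refine Finset.sum_congr rfl fun k _ => Finset.sum_congr rfl fun l _ => ?_
        have h2 : S' l k = S' k l := by
          rw [← congrFun (congrFun hsym k) l, transpose_apply]
        rw [h2]; ring
      rw [key]; ring
    · -- (inr i, inr j)
      rw [hA' i j]; ring
  · rw [col_va_iff]
    intro u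
    rcases u with (u|u) | k <;> simp [Psi, va, vb, Pi.single_apply]

end CardRed
section Part3

variable {R : Type*} [CommRing R] {ι : Type*} [Fintype ι] [DecidableEq ι]

namespace CardRed

lemma vb_ne_va : (vb : V ι) ≠ va := by simp [va, vb]

lemma mem_psi {half : R} (h : 2 * half = 1) {S' : Matrix ι ι R} (hsym : S'ᵀ = S')
    {M : Matrix (V ι) (V ι) R} (hM : M ∈ Tset S') :
    (Matrix.of fun k l => M (Sum.inr k) (Sum.inr l)) ∈ Oset S' ∧
      M = Psi half S' (Matrix.of fun k l => M (Sum.inr k) (Sum.inr l))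
        (fun k => M (Sum.inr k) vb) := by
  set A : Matrix ι ι R := Matrix.of fun k l => M (Sum.inr k) (Sum.inr l) with hAdef
  set w : ι → R := fun k => M (Sum.inr k) vb with hwdef
  have key : ∀ u v, M va u * M vb v + M vb u * M va v +
      ∑ k, ∑ l, M (Sum.inr k) u * S' k l * M (Sum.inr l) v = hatS S' u v := by
    intro u v; rw [← entry_eq, hM.1]
  have colva := (col_va_iff M).1 hM.2
  have c1 : M va va = 1 := by simpa using colva va
  have c2 : M vb va = 0 := by
    have := colva vb
    rwa [Pi.single_eq_of_ne vb_ne_va] at this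
  have c3 : ∀ k, M (Sum.inr k) va = 0 := by
    intro k
    have := colva (Sum.inr k)
    rwa [Pi.single_eq_of_ne (by simp [va])] at this
  have rowb : ∀ v, M vb v = hatS S' va v := by
    intro v
    have := key va v
    simpa [c1, c2, c3] using this
  have rb1 : M vb vb = 1 := by
    have := rowb vb
    simpa [hatS, va, vb] using this
  have rb2 : ∀ j, M vb (Sum.inr j) = 0 := by
    intro j
    have := rowb (Sum.inr j)
    simpa [hatS, va, vb] using this
  have hAO : A ∈ Oset S' := by
    show Aᵀ * S' * A = S'
    ext i j
    rw [oform]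
    have := key (Sum.inr i) (Sum.inr j)
    simp only [rb2, mul_zero, zero_mul, add_zero, zero_add] at this
    have h2 : hatS S' (Sum.inr i) (Sum.inr j) = S' i j := rfl
    rw [h2] at this
    simpa [hAdef] using this
  have havb : M va vb = -(half * qf S' w) := by
    have e := key vb vb
    rw [rb1] at e
    have h0 : hatS S' (vb : V ι) vb = 0 := rfl
    rw [h0] at e
    have hq : qf S' w = ∑ k, ∑ l, M (Sum.inr k) vb * S' k l * M (Sum.inr l) vb := rfl
    rw [hq]
    linear_combination half * e + (-(M va vb)) * h
  have harj : ∀ j, M va (Sum.inr j) = -∑ k, ∑ l, w k * S' k l * A l j := by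
    intro j
    have e := key vb (Sum.inr j)
    rw [rb1, rb2] at e
    have h0 : hatS S' (vb : V ι) (Sum.inr j) = 0 := rfl
    rw [h0] at e
    have hq : (∑ k, ∑ l, w k * S' k l * A l j) =
        ∑ k, ∑ l, M (Sum.inr k) vb * S' k l * M (Sum.inr l) (Sum.inr j) := rfl
    rw [hq]
    linear_combination e
  refine ⟨hAO, ?_⟩
  ext u v
  rcases u with (u|u) | i <;> rcases v with (v|v) | j <;>
    simp only [Psi, Matrix.of_apply, va, vb] at *
  · exact c1
  · exact havb
  · exact harj j
  · exact c2
  · exact rb1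
  · exact rb2 j
  · exact c3 i
  · rfl
  · rfl

variable {R' : Type*} [CommRing R']

lemma Psi_map (f : R →+* R') (half : R) (S' A : Matrix ι ι R) (w : ι → R) :
    (Psi half S' A w).map f = Psi (f half) (S'.map f) (A.map f) (f ∘ w) := by
  ext u v
  rcases u with (u|u) | i <;> rcases v with (v|v) | j <;>
    simp [Psi, qf, map_sum, _root_.map_mul, map_neg, Function.comp, Matrix.map_apply]

lemma core (half : R) (h : 2 * half = 1) (S' : Matrix ι ι R) (hsym : S'ᵀ = S')
    (I : Ideal R) :
    Nat.card ((fun M : Matrix (V ι) (V ι) R => M.map (Ideal.Quotient.mk I)) '' Tset S') =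
      Nat.card ((fun A : Matrix ι ι R => A.map (Ideal.Quotient.mk I)) '' Oset S') *
        Nat.card (ι → R ⧸ I) := by
  set ρ := Ideal.Quotient.mk I with hρ
  have hh : (2 : R ⧸ I) * ρ half = 1 := by
    have := congrArg ρ h
    rw [_root_.map_mul, _root_.map_one] at this
    rwa [show ρ 2 = 2 from map_ofNat ρ 2] at this
  set S'' := S'.map ρ with hS''
  have hsym'' : S''ᵀ = S'' := by
    ext i j
    show ρ (S' j i) = ρ (S' i j)
    rw [show S' j i = S' i j from by rw [← congrFun (congrFun hsym i) j]; rfl]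
  have himg : (fun M : Matrix (V ι) (V ι) R => M.map ρ) '' Tset S' =
      (fun p : Matrix ι ι (R ⧸ I) × (ι → R ⧸ I) => Psi (ρ half) S'' p.1 p.2) ''
        (((fun A : Matrix ι ι R => A.map ρ) '' Oset S') ×ˢ
          (Set.univ : Set (ι → R ⧸ I))) := by
    ext x
    constructor
    · rintro ⟨M, hM, rfl⟩
      obtain ⟨hAO, hMeq⟩ := mem_psi h hsym hM
      refine ⟨((Matrix.of fun k l => M (Sum.inr k) (Sum.inr l)).map ρ,
        ρ ∘ fun k => M (Sum.inr k) vb), ⟨⟨_, hAO, rfl⟩, trivial⟩, ?_⟩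
      dsimp only
      rw [← Psi_map, ← hMeq]
    · rintro ⟨⟨Ab, wb⟩, ⟨⟨A, hAO, rfl⟩, -⟩, rfl⟩
      choose w hw using fun k => Ideal.Quotient.mk_surjective (wb k)
      refine ⟨Psi half S' A w, psi_mem half h S' hsym A hAO w, ?_⟩
      dsimp only
      rw [Psi_map, show (⇑ρ ∘ w) = wb from funext hw]
  have hinj : Function.Injective
      (fun p : Matrix ι ι (R ⧸ I) × (ι → R ⧸ I) => Psi (ρ half) S'' p.1 p.2) := by
    intro p q hpq
    have hpq' : Psi (ρ half) S'' p.1 p.2 = Psi (ρ half) S'' q.1 q.2 := hpq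
    have hent : ∀ u v, Psi (ρ half) S'' p.1 p.2 u v = Psi (ρ half) S'' q.1 q.2 u v :=
      fun u v => by rw [hpq']
    refine Prod.ext ?_ ?_
    · ext k l
      exact hent (Sum.inr k) (Sum.inr l)
    · funext k
      exact hent (Sum.inr k) vb
  rw [himg, Nat.card_image_of_injective hinj,
    Nat.card_congr (Equiv.Set.prod _ _), Nat.card_prod, Nat.card_univ]

end CardRed

end Part3
section Part4

namespace CardRed

variable {R : Type*} [CommRing R]

def toFin (n : ℕ) (hn : 2 ≤ n) : V (Fin (n - 2)) → Fin n
  | Sum.inl (Sum.inl _) => ⟨0, Nat.lt_of_lt_of_le Nat.zero_lt_two hn⟩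
  | Sum.inl (Sum.inr _) => ⟨n / 2, by omega⟩
  | Sum.inr k => ⟨if (k : ℕ) < n / 2 - 1 then (k : ℕ) + 1 else (k : ℕ) + 2, by
      have hk := k.isLt; split <;> omega⟩

lemma toFin_bij (n : ℕ) (hn : 2 ≤ n) : Function.Bijective (toFin n hn) := by
  constructor
  · rintro ((⟨⟩|⟨⟩) | k) ((⟨⟩|⟨⟩) | l) h <;>
      simp only [toFin, Fin.mk.injEq] at h <;>
      first
        | rfl
        | (exfalso
           have hk : True := trivial
           first
             | omega
             | (split_ifs at h <;> omega))
        | (have hk := k.isLt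
           have hl := l.isLt
           have : (k : ℕ) = (l : ℕ) := by split_ifs at h <;> omega
           exact congrArg Sum.inr (Fin.ext this))
  · intro i
    have hi := i.isLt
    by_cases h0 : (i : ℕ) = 0
    · exact ⟨Sum.inl (Sum.inl ()), Fin.ext (by simp [toFin]; omega)⟩
    by_cases hm : (i : ℕ) = n / 2
    · exact ⟨Sum.inl (Sum.inr ()), Fin.ext (by simp [toFin]; omega)⟩
    refine ⟨Sum.inr ⟨if (i : ℕ) < n / 2 then (i : ℕ) - 1 else (i : ℕ) - 2, ?_⟩,
      Fin.ext ?_⟩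
    · split_ifs <;> (try simp) <;> omega
    · simp only [toFin]
      split_ifs <;> (try simp) <;> omega

lemma splitForm_symm (n : ℕ) : (splitForm R n)ᵀ = splitForm R n := by
  ext i j
  simp only [transpose_apply, splitForm, Matrix.of_apply]
  refine if_congr ?_ rfl rfl
  constructor <;> intro h <;> omega

lemma splitForm_submatrix (n : ℕ) (hn : 2 ≤ n) :
    (splitForm R n).submatrix (toFin n hn) (toFin n hn) =
      hatS (splitForm R (n - 2)) := by
  ext u v
  rcases u with ((⟨⟩|⟨⟩) | k) <;> rcases v with ((⟨⟩|⟨⟩) | l) <;>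
      simp only [submatrix_apply, toFin, hatS, splitForm, Matrix.of_apply]
  · rw [if_neg (by omega)]
  · rw [if_pos (by omega)]
  · have hl := l.isLt
    rw [if_neg (by split_ifs <;> (try simp) <;> omega)]
  · rw [if_pos (by omega)]
  · rw [if_neg (by omega)]
  · have hl := l.isLt
    rw [if_neg (by split_ifs <;> (try simp) <;> omega)]
  · have hk := k.isLt
    rw [if_neg (by split_ifs <;> (try simp) <;> omega)]
  · have hk := k.isLt
    rw [if_neg (by split_ifs <;> (try simp) <;> omega)]
  · have hk := k.isLt
    have hl := l.isLt
    by_cases h1 : (k : ℕ) < n / 2 - 1 <;> by_cases h2 : (l : ℕ) < n / 2 - 1 <;>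
        simp only [h1, h2, if_true, if_false] <;>
      · refine if_congr ?_ rfl rfl
        constructor <;> intro h <;> omega

lemma single_comp (n : ℕ) (hn : 2 ≤ n) (h0 : 0 < n) :
    (Pi.single (⟨0, h0⟩ : Fin n) (1 : R)) ∘ toFin n hn =
      Pi.single (va : V (Fin (n - 2))) 1 := by
  funext u
  rcases u with ((⟨⟩|⟨⟩) | k)
  · simp [toFin, Pi.single_apply, va]
  · have hne : ¬(n / 2 = 0) := by omega
    simp [toFin, Pi.single_apply, va, vb, Fin.mk.injEq, hne]
  · have hk := k.isLt
    have hne : ¬((if (k : ℕ) < n / 2 - 1 then (k : ℕ) + 1 else (k : ℕ) + 2) = 0) := by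
      split_ifs <;> (try simp) <;> omega
    simp [toFin, Pi.single_apply, va, Fin.mk.injEq, hne]

end CardRed

end Part4
theorem card_reduction_stabilizer_eq
    {R : Type*} [CommRing R] (h2 : IsUnit (2 : R))
    (I : Ideal R) (n : ℕ) (hn : 2 ≤ n) :
    Nat.card ((fun M : Matrix (Fin n) (Fin n) R => M.map (Ideal.Quotient.mk I)) ''
        {M | Mᵀ * splitForm R n * M = splitForm R n ∧
          M *ᵥ Pi.single (⟨0, by omega⟩ : Fin n) 1 =
            Pi.single (⟨0, by omega⟩ : Fin n) 1}) =
      Nat.card ((fun M : Matrix (Fin (n - 2)) (Fin (n - 2)) R =>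
            M.map (Ideal.Quotient.mk I)) ''
          {M | Mᵀ * splitForm R (n - 2) * M = splitForm R (n - 2)}) *
        Nat.card (R ⧸ I) ^ (n - 2) := by
  classical
  obtain ⟨half, hhalf⟩ : ∃ h : R, 2 * h = 1 :=
    ⟨↑h2.unit⁻¹, by have := h2.unit.mul_inv; rwa [h2.unit_spec] at this⟩
  set ρ := Ideal.Quotient.mk I with hρ
  let e : CardRed.V (Fin (n - 2)) ≃ Fin n :=
    Equiv.ofBijective _ (CardRed.toFin_bij n hn)
  have hecoe : ⇑e = CardRed.toFin n hn := rfl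
  have hsubinjR : ∀ (X Y : Matrix (Fin n) (Fin n) R),
      X.submatrix ⇑e ⇑e = Y.submatrix ⇑e ⇑e → X = Y := by
    intro X Y h
    have h2' := congrArg (fun Z : Matrix _ _ R => Z.submatrix ⇑e.symm ⇑e.symm) h
    simpa [Matrix.submatrix_submatrix, Equiv.self_comp_symm] using h2'
  have hsubinjQ : ∀ (X Y : Matrix (Fin n) (Fin n) (R ⧸ I)),
      X.submatrix ⇑e ⇑e = Y.submatrix ⇑e ⇑e → X = Y := by
    intro X Y h
    have h2' := congrArg (fun Z : Matrix _ _ (R ⧸ I) => Z.submatrix ⇑e.symm ⇑e.symm) h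
    simpa [Matrix.submatrix_submatrix, Equiv.self_comp_symm] using h2'
  have hcomp : ∀ f g : Fin n → R, f ∘ ⇑e = g ∘ ⇑e → f = g := by
    intro f g h
    funext i
    have := congrFun h (e.symm i)
    simpa using this
  have hS : (splitForm R n).submatrix ⇑e ⇑e = CardRed.hatS (splitForm R (n - 2)) := by
    rw [hecoe]; exact CardRed.splitForm_submatrix n hn
  have hsingle2 : Pi.single (⟨0, by omega⟩ : Fin n) (1 : R) ∘ ⇑e =
      Pi.single (CardRed.va : CardRed.V (Fin (n - 2))) 1 := by
    rw [hecoe]; exact CardRed.single_comp n hn (by omega)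
  have hsingle : (Pi.single (CardRed.va : CardRed.V (Fin (n - 2))) (1 : R)) ∘ ⇑e.symm =
      Pi.single (⟨0, by omega⟩ : Fin n) 1 := by
    rw [← hsingle2, Function.comp_assoc, Equiv.self_comp_symm, Function.comp_id]
  have hT : ∀ M : Matrix (Fin n) (Fin n) R,
      (Mᵀ * splitForm R n * M = splitForm R n ∧
        M *ᵥ Pi.single (⟨0, by omega⟩ : Fin n) 1 =
          Pi.single (⟨0, by omega⟩ : Fin n) 1) ↔
      M.submatrix ⇑e ⇑e ∈ CardRed.Tset (splitForm R (n - 2)) := by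
    intro M
    have key1 : (M.submatrix ⇑e ⇑e)ᵀ * CardRed.hatS (splitForm R (n - 2)) *
        (M.submatrix ⇑e ⇑e) = (Mᵀ * splitForm R n * M).submatrix ⇑e ⇑e := by
      rw [← hS, Matrix.transpose_submatrix, Matrix.submatrix_mul_equiv,
        Matrix.submatrix_mul_equiv]
    have key2 : (M.submatrix ⇑e ⇑e) *ᵥ
        Pi.single (CardRed.va : CardRed.V (Fin (n - 2))) 1 =
        (M *ᵥ Pi.single (⟨0, by omega⟩ : Fin n) 1) ∘ ⇑e := by
      rw [Matrix.submatrix_mulVec_equiv, hsingle]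
    constructor
    · rintro ⟨hc1, hc2⟩
      refine ⟨?_, ?_⟩
      · rw [key1, hc1]; exact hS
      · rw [key2, hc2]; exact hsingle2
    · rintro ⟨hc1, hc2⟩
      refine ⟨?_, ?_⟩
      · apply hsubinjR
        rw [← key1, hc1]; exact hS.symm
      · apply hcomp
        rw [← key2, hc2]; exact hsingle2.symm
  have himg : (fun X : Matrix (Fin n) (Fin n) (R ⧸ I) => X.submatrix ⇑e ⇑e) ''
      ((fun M : Matrix (Fin n) (Fin n) R => M.map ρ) ''
        {M | Mᵀ * splitForm R n * M = splitForm R n ∧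
          M *ᵥ Pi.single (⟨0, by omega⟩ : Fin n) 1 =
            Pi.single (⟨0, by omega⟩ : Fin n) 1}) =
      (fun M : Matrix (CardRed.V (Fin (n - 2))) (CardRed.V (Fin (n - 2))) R => M.map ρ) ''
        CardRed.Tset (splitForm R (n - 2)) := by
    ext x
    constructor
    · rintro ⟨-, ⟨M, hM, rfl⟩, rfl⟩
      exact ⟨M.submatrix ⇑e ⇑e, (hT M).1 hM, (Matrix.submatrix_map _ _ _ _).symm⟩
    · rintro ⟨N, hN, rfl⟩
      refine ⟨(N.submatrix ⇑e.symm ⇑e.symm).map ρ,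
        ⟨N.submatrix ⇑e.symm ⇑e.symm, ?_, rfl⟩, ?_⟩
      · apply (hT _).2
        simpa [Matrix.submatrix_submatrix, Equiv.symm_comp_self] using hN
      · dsimp only
        rw [Matrix.submatrix_map]
        simp [Matrix.submatrix_submatrix, Equiv.symm_comp_self]
  have hinj2 : Function.Injective
      (fun X : Matrix (Fin n) (Fin n) (R ⧸ I) => X.submatrix ⇑e ⇑e) :=
    fun X Y h => hsubinjQ X Y h
  have hcard := Nat.card_image_of_injective hinj2
    ((fun M : Matrix (Fin n) (Fin n) R => M.map ρ) ''
      {M | Mᵀ * splitForm R n * M = splitForm R n ∧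
        M *ᵥ Pi.single (⟨0, by omega⟩ : Fin n) 1 =
          Pi.single (⟨0, by omega⟩ : Fin n) 1})
  rw [himg] at hcard
  rw [← hcard,
    CardRed.core half hhalf (splitForm R (n - 2)) (CardRed.splitForm_symm (n - 2)) I]
  congr 1
  rw [Nat.card_fun, Nat.card_eq_fintype_card (α := Fin (n - 2)), Fintype.card_fin]
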